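/- arXiv:2501.17704 — 5 statements merged into one kernel-verified Lean document; each statement's English description precedes it below -/
import Mathlib

section
/- Let G be a finite directed graph with start vertex s0 and goal set S_G, and let b be a vertex with b ≠ s0 and b ∉ S_G. Define a reward function R with R(b) = n < 0, R(g) = p > 0 for g ∈ S_G where goals are absorbing, R = 0 elsewhere, and |n| sufficiently large. Then b is not a bottleneck (i.e., some s0-to-goal path avoids b) if and only if the optimal discounted value V*(s0) in the induced deterministic MDP is strictly positive. -/
open scoped Classical

/-- A goal-reaching path in a directed graph. -/
def IsGoalPath {V : Type} (E : V → V → Prop) (s0 : V) (SG : Set V) (p : List V) : Prop :=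
  p ≠ [] ∧ p.head? = some s0 ∧ p.Chain' E ∧ ∃ g ∈ SG, p.getLast? = some g

private lemma aux_summable (γ : ℝ) (hγ0 : 0 ≤ γ) (hγ1 : γ < 1) (f : ℕ → ℝ) (M : ℝ)
    (hb : ∀ i, |f i| ≤ γ ^ i * M) : Summable f := by
  have hg : Summable (fun i : ℕ => γ ^ i * M) :=
    (summable_geometric_of_lt_one hγ0 hγ1).mul_right M
  exact Summable.of_abs (Summable.of_nonneg_of_le (fun i => abs_nonneg _) hb hg)

private lemma aux_tail_summable (γ c : ℝ) (hγ0 : 0 ≤ γ) (hγ1 : γ < 1) (hc : 0 ≤ c) (k : ℕ) :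
    Summable (fun i : ℕ => if k ≤ i then γ ^ i * c else 0) := by
  have hg : Summable (fun i : ℕ => γ ^ i * c) :=
    (summable_geometric_of_lt_one hγ0 hγ1).mul_right c
  refine Summable.of_nonneg_of_le (fun i => ?_) (fun i => ?_) hg
  · split <;> positivity
  · split
    · exact le_rfl
    · positivity

private lemma aux_tail_geo (γ c : ℝ) (hγ0 : 0 ≤ γ) (hγ1 : γ < 1) (k : ℕ) :
    ∑' i : ℕ, (if k ≤ i then γ ^ i * c else 0) = γ ^ k * c * (1 - γ)⁻¹ := by
  have hinj : Function.Injective (fun m : ℕ => m + k) := fun a b h => by simpa using h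
  have hsupp : Function.support (fun i : ℕ => if k ≤ i then γ ^ i * c else 0)
      ⊆ Set.range (fun m : ℕ => m + k) := by
    intro i hi
    by_cases h : k ≤ i
    · exact ⟨i - k, by simp; omega⟩
    · simp only [Function.mem_support, if_neg h, ne_eq, not_true_eq_false] at hi
  rw [← hinj.tsum_eq hsupp]
  have : ∀ m : ℕ, (if k ≤ m + k then γ ^ (m + k) * c else 0) = (γ ^ k * c) * γ ^ m := by
    intro m
    rw [if_pos (by omega), pow_add]
    ring
  simp only [this]
  rw [tsum_mul_left, tsum_geometric_of_lt_one hγ0 hγ1]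

/-- with reward `n < 0` at `b`, `p > 0` at absorbing goal states and `0`
elsewhere, and `|n|` sufficiently large (`|n| > p/(1-γ)`), the vertex `b` (with
`b ≠ s0`, `b ∉ SG`) is not a bottleneck — i.e. some `s0`-to-goal path avoids `b` —
iff the optimal discounted value `V*(s0)` of the induced deterministic MDP
(the supremum of discounted trajectory rewards) is strictly positive. -/
theorem stmt4 {V : Type} [Fintype V] (E : V → V → Prop) (s0 : V) (SG : Set V) (b : V)
    (γ p n : ℝ) (hγ0 : 0 < γ) (hγ1 : γ < 1) (hp : 0 < p) (hn : n < 0)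
    (hbig : p / (1 - γ) < |n|)
    (hb0 : b ≠ s0) (hbG : b ∉ SG)
    (htotal : ∀ v, ∃ w, E v w)
    (habs : ∀ g ∈ SG, ∀ w, E g w ↔ w = g)
    (R : V → ℝ)
    (hR : ∀ v, R v = if v = b then n else if v ∈ SG then p else 0) :
    (∃ q : List V, IsGoalPath E s0 SG q ∧ b ∉ q) ↔
      0 < sSup { x : ℝ | ∃ t : ℕ → V, t 0 = s0 ∧ (∀ i, E (t i) (t (i + 1))) ∧
                    x = ∑' i : ℕ, γ ^ i * R (t i) } := by
  have hγ0' : (0:ℝ) ≤ γ := le_of_lt hγ0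
  have h1γ : (0:ℝ) < 1 - γ := by linarith
  set M : ℝ := max p |n| with hM
  have hRabs : ∀ v, |R v| ≤ M := by
    intro v
    rw [hR]
    split
    · exact le_max_right _ _
    · split
      · rw [abs_of_pos hp]; exact le_max_left _ _
      · simp only [abs_zero]
        exact le_trans (le_of_lt hp) (le_max_left _ _)
  have hRle : ∀ v, R v ≤ p := by
    intro v
    rw [hR]
    split
    · linarith
    · split
      · exact le_rfl
      · linarith
  have hsum : ∀ t : ℕ → V, Summable (fun i => γ ^ i * R (t i)) := by
    intro t
    refine aux_summable γ hγ0' hγ1 _ M (fun i => ?_)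
    rw [abs_mul, abs_pow, abs_of_nonneg hγ0']
    exact mul_le_mul_of_nonneg_left (hRabs _) (pow_nonneg hγ0' i)
  set S : Set ℝ := { x : ℝ | ∃ t : ℕ → V, t 0 = s0 ∧ (∀ i, E (t i) (t (i + 1))) ∧
      x = ∑' i : ℕ, γ ^ i * R (t i) } with hS
  have hbdd : BddAbove S := by
    refine ⟨(1 - γ)⁻¹ * p, ?_⟩
    rintro x ⟨t, _, _, rfl⟩
    calc ∑' i : ℕ, γ ^ i * R (t i) ≤ ∑' i : ℕ, γ ^ i * p := by
          refine Summable.tsum_le_tsum (fun i => ?_) (hsum t)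
            ((summable_geometric_of_lt_one hγ0' hγ1).mul_right p)
          exact mul_le_mul_of_nonneg_left (hRle _) (pow_nonneg hγ0' i)
      _ = (1 - γ)⁻¹ * p := by
          rw [tsum_mul_right, tsum_geometric_of_lt_one hγ0' hγ1]
  constructor
  · rintro ⟨q, ⟨hne, hhead, hchain, g, hgSG, hlast⟩, hbq⟩
    set L := q.length with hLdef
    have hL : 0 < L := List.length_pos_iff.mpr hne
    set t : ℕ → V := fun i => q.getD i g with ht
    have hget : ∀ i (h : i < L), t i = q.get ⟨i, h⟩ := by
      intro i h
      simp [ht, List.getD_eq_getElem?_getD, List.getElem?_eq_getElem h]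
    have hafter : ∀ i, L ≤ i → t i = g := by
      intro i h
      simp [ht, List.getD_eq_getElem?_getD, List.getElem?_eq_none h]
    have hglast : q.getLast hne = g := by
      have := List.getLast?_eq_getLast hne
      rw [this] at hlast
      exact Option.some_injective _ hlast
    have hgetlast : t (L - 1) = g := by
      rw [hget (L - 1) (by omega), ← hglast]
      simp [List.getLast_eq_getElem, hLdef]
    have hEgg : E g g := (habs g hgSG g).mpr rfl
    have h0 : t 0 = s0 := by
      rw [hget 0 hL]
      have h1 : q.head? = some (q.head hne) := List.head?_eq_head hne
      rw [h1] at hhead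
      have h2 := Option.some_injective _ hhead
      rw [← h2]
      simp [List.get_eq_getElem, List.head_eq_getElem]
    have hstep : ∀ i, E (t i) (t (i + 1)) := by
      intro i
      by_cases h1 : i + 1 < L
      · rw [hget i (by omega), hget (i + 1) h1]
        exact List.isChain_iff_getElem.mp hchain i (by omega)
      · by_cases h2 : i < L
        · have : i = L - 1 := by omega
          rw [this, hgetlast, hafter (L - 1 + 1) (by omega)]
          exact hEgg
        · rw [hafter i (by omega), hafter (i + 1) (by omega)]
          exact hEgg
    have htb : ∀ i, t i ≠ b := by
      intro i
      by_cases h : i < L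
      · rw [hget i h]
        intro hc
        exact hbq (hc ▸ List.get_mem q ⟨i, h⟩)
      · rw [hafter i (by omega)]
        exact fun hc => hbG (by rw [← hc]; exact hgSG)
    have hfnn : ∀ i, 0 ≤ γ ^ i * R (t i) := by
      intro i
      refine mul_nonneg (pow_nonneg hγ0' i) ?_
      rw [hR, if_neg (htb i)]
      split
      · exact le_of_lt hp
      · exact le_rfl
    have hfK : γ ^ (L - 1) * R (t (L - 1)) = γ ^ (L - 1) * p := by
      rw [hgetlast, hR, if_neg (show g ≠ b from fun hc => hbG (by rw [← hc]; exact hgSG)), if_pos hgSG]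
    have hmem : (∑' i : ℕ, γ ^ i * R (t i)) ∈ S := ⟨t, h0, hstep, rfl⟩
    have hle : γ ^ (L - 1) * p ≤ ∑' i : ℕ, γ ^ i * R (t i) := by
      rw [← hfK]
      exact Summable.le_tsum (hsum t) (L - 1) (fun j _ => hfnn j)
    have : 0 < γ ^ (L - 1) * p := by positivity
    calc (0:ℝ) < γ ^ (L - 1) * p := this
      _ ≤ ∑' i : ℕ, γ ^ i * R (t i) := hle
      _ ≤ sSup S := le_csSup hbdd hmem
  · intro hpos
    by_contra hno
    push_neg at hno
    have hub : ∀ x ∈ S, x ≤ 0 := by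
      rintro x ⟨t, h0, hstep, rfl⟩
      by_cases hgoal : ∃ i, t i ∈ SG
      · -- t reaches a goal; first goal time k
        set k := Nat.find hgoal with hk
        have hkSG : t k ∈ SG := Nat.find_spec hgoal
        have hmin : ∀ i, i < k → t i ∉ SG := fun i hi => Nat.find_min hgoal hi
        -- the prefix is a goal path
        set q : List V := (List.range (k + 1)).map t with hq
        have hqlen : q.length = k + 1 := by simp [hq]
        have hqne : q ≠ [] := by
          intro hc
          rw [hc] at hqlen
          simp at hqlen
        have hqget : ∀ i (h : i < q.length), q.get ⟨i, h⟩ = t i := by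
          intro i h
          simp [hq]
        have hqpath : IsGoalPath E s0 SG q := by
          refine ⟨hqne, ?_, ?_, t k, hkSG, ?_⟩
          · rw [List.head?_eq_head hqne, List.head_eq_getElem]
            simp [hq, h0]
          · refine List.isChain_iff_getElem.mpr ?_
            intro i hi
            have e1 := hqget i (by omega)
            have e2 := hqget (i + 1) (by omega)
            simp only [List.get_eq_getElem] at e1 e2
            rw [e1, e2]
            exact hstep i
          · rw [List.getLast?_eq_getLast hqne]
            congr 1
            rw [List.getLast_eq_getElem]
            have e3 := hqget (q.length - 1) (by omega)
            simp only [List.get_eq_getElem] at e3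
            rw [e3]
            congr 1
            omega
        have hbmem : b ∈ q := hno q hqpath
        obtain ⟨j, hjr, hjb⟩ := List.mem_map.mp hbmem
        have hjk : j < k := by
          have hjk1 : j < k + 1 := List.mem_range.mp hjr
          rcases Nat.lt_or_ge j k with h | h
          · exact h
          · exfalso
            have : j = k := by omega
            rw [this] at hjb
            exact hbG (hjb ▸ hkSG)
        have hstay : ∀ i, k ≤ i → t i = t k := by
          intro i hi
          induction i, hi using Nat.le_induction with
          | base => rfl
          | succ m hm ih =>
            have := hstep m
            rw [ih] at this
            exact (habs (t k) hkSG (t (m + 1))).mp this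
        -- reward bounds
        have hfle : ∀ i, γ ^ i * R (t i) ≤
            (if i = j then γ ^ i * n else 0) + (if k ≤ i then γ ^ i * p else 0) := by
          intro i
          by_cases hik : k ≤ i
          · have hiq : i ≠ j := by omega
            rw [if_neg hiq, if_pos hik, zero_add]
            have : R (t i) = p := by
              rw [hstay i hik, hR, if_neg (show t k ≠ b from fun hc => hbG (hc ▸ hkSG)),
                if_pos hkSG]
            rw [this]
          · rw [if_neg hik, add_zero]
            by_cases hij : i = j
            · subst hij
              rw [if_pos rfl, hjb, hR, if_pos rfl]
            · rw [if_neg hij]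
              refine mul_nonpos_iff.mpr (Or.inl ⟨pow_nonneg hγ0' i, ?_⟩)
              rw [hR]
              split
              · exact le_of_lt hn
              · rw [if_neg (hmin i (by omega))]
        have hsum1 : Summable (fun i : ℕ => if i = j then γ ^ i * n else 0) := by
          have : (fun i : ℕ => if i = j then γ ^ i * n else 0)
              = (fun i : ℕ => if i = j then γ ^ j * n else 0) := by
            funext i
            by_cases h : i = j <;> simp [h]
          rw [this]
          exact (hasSum_ite_eq j (γ ^ j * n)).summable
        have hsum2 : Summable (fun i : ℕ => if k ≤ i then γ ^ i * p else 0) :=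
          aux_tail_summable γ p hγ0' hγ1 (le_of_lt hp) k
        have hle1 : ∑' i : ℕ, γ ^ i * R (t i) ≤
            (∑' i : ℕ, if i = j then γ ^ i * n else 0) +
            (∑' i : ℕ, if k ≤ i then γ ^ i * p else 0) := by
          rw [← Summable.tsum_add hsum1 hsum2]
          exact Summable.tsum_le_tsum hfle (hsum t) (hsum1.add hsum2)
        have heq1 : (∑' i : ℕ, if i = j then γ ^ i * n else 0) = γ ^ j * n := by
          have : (fun i : ℕ => if i = j then γ ^ i * n else 0)
              = (fun i : ℕ => if i = j then γ ^ j * n else 0) := by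
            funext i
            by_cases h : i = j <;> simp [h]
          rw [this]
          exact tsum_ite_eq j (fun _ => γ ^ j * n)
        have heq2 : (∑' i : ℕ, if k ≤ i then γ ^ i * p else 0) = γ ^ k * p * (1 - γ)⁻¹ :=
          aux_tail_geo γ p hγ0' hγ1 k
        rw [heq1, heq2] at hle1
        have hjn : γ ^ j * n ≤ γ ^ k * n := by
          have hpow : γ ^ k ≤ γ ^ j :=
            pow_le_pow_of_le_one hγ0' (le_of_lt hγ1) (le_of_lt hjk)
          nlinarith
        have hnp : n + p * (1 - γ)⁻¹ ≤ 0 := by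
          rw [abs_of_neg hn, div_eq_mul_inv] at hbig
          linarith
        have hfinal : γ ^ j * n + γ ^ k * p * (1 - γ)⁻¹ ≤ 0 := by
          have h2 : γ ^ k * n + γ ^ k * p * (1 - γ)⁻¹ = γ ^ k * (n + p * (1 - γ)⁻¹) := by ring
          have h3 : γ ^ k * (n + p * (1 - γ)⁻¹) ≤ 0 :=
            mul_nonpos_iff.mpr (Or.inl ⟨pow_nonneg hγ0' k, hnp⟩)
          linarith
        linarith
      · -- never reaches a goal: all rewards nonpositive
        push_neg at hgoal
        refine tsum_nonpos (fun i => ?_)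
        refine mul_nonpos_iff.mpr (Or.inl ⟨pow_nonneg hγ0' i, ?_⟩)
        rw [hR]
        split
        · exact le_of_lt hn
        · rw [if_neg (hgoal i)]
    have := Real.sSup_le hub le_rfl
    linarith
end

section
/- In a finite directed graph with start s0 and goal set S_G, if some goal vertex is reachable from s0 and b is not a bottleneck, then there exists a simple path from s0 to a goal vertex avoiding b; consequently a deterministic policy following this path achieves the goal with value at least γ^(|S|) · p (where p is the goal reward) and never incurs the penalty at b. -/
open scoped Classical

private lemma dup_decomp {α : Type} {x : α} {l : List α} (h : List.Duplicate x l) :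
    ∃ a c d : List α, l = a ++ x :: (c ++ x :: d) := by
  induction h with
  | cons_mem hm =>
      obtain ⟨c, d, rfl⟩ := List.append_of_mem hm
      exact ⟨[], c, d, rfl⟩
  | cons_duplicate _ ih =>
      obtain ⟨a, c, d, rfl⟩ := ih
      exact ⟨_ :: a, c, d, rfl⟩

private lemma simplify_path {V : Type} (E : V → V → Prop) :
    ∀ (n : ℕ) (q : List V), q.length ≤ n → q.Chain' E →
    ∃ q' : List V, q'.Chain' E ∧ q'.head? = q.head? ∧ q'.getLast? = q.getLast? ∧
      q'.Nodup ∧ ∀ x ∈ q', x ∈ q := by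
  intro n
  induction n with
  | zero =>
      intro q hlen hc
      have : q = [] := List.length_eq_zero_iff.mp (Nat.le_zero.mp hlen)
      subst this
      exact ⟨[], List.isChain_nil, rfl, rfl, by simp, by simp⟩
  | succ n ih =>
      intro q hlen hc
      by_cases hnd : q.Nodup
      · exact ⟨q, hc, rfl, rfl, hnd, fun x hx => hx⟩
      · obtain ⟨x, hdup⟩ := List.exists_duplicate_iff_not_nodup.2 hnd
        obtain ⟨a, c, d, rfl⟩ := dup_decomp hdup
        have hre : a ++ x :: (c ++ x :: d) = a ++ ((x :: c) ++ (x :: d)) := by simp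
        rw [hre] at hc
        rw [List.Chain', List.isChain_append, List.isChain_append] at hc
        have chain1 : (a ++ x :: d).Chain' E := by
          rw [List.Chain', List.isChain_append]
          exact ⟨hc.1, hc.2.1.2.1, by simpa using hc.2.2⟩
        have hlen1 : (a ++ x :: d).length ≤ n := by
          simp only [List.length_append, List.length_cons] at hlen ⊢
          omega
        obtain ⟨q', h1, h2, h3, h4, h5⟩ := ih (a ++ x :: d) hlen1 chain1
        refine ⟨q', h1, ?_, ?_, h4, ?_⟩
        · rw [h2]; cases a <;> simp
        · rw [h3, List.getLast?_append_of_ne_nil a (by simp),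
            List.getLast?_append_of_ne_nil a (by simp),
            show x :: (c ++ x :: d) = (x :: c) ++ (x :: d) by simp,
            List.getLast?_append_of_ne_nil (x :: c) (by simp)]
        · intro y hy
          have := h5 y hy
          simp only [List.mem_append, List.mem_cons] at this ⊢
          tauto

/-- if some goal is reachable from `s0` and `b` is not a bottleneck,
then some *simple* path from `s0` to a goal avoids `b`; consequently there is a
trajectory (induced by a deterministic policy following this path) that never visits
`b` and whose discounted value, for goal reward `p > 0` and reward `0` elsewhere,
is at least `γ^(|S|) · p`. -/
theorem stmt5 {V : Type} [Fintype V] (E : V → V → Prop) (s0 : V) (SG : Set V) (b : V)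
    (γ p : ℝ) (hγ0 : 0 < γ) (hγ1 : γ < 1) (hp : 0 < p)
    (htotal : ∀ v, ∃ w, E v w)
    (habs : ∀ g ∈ SG, ∀ w, E g w ↔ w = g)
    (R : V → ℝ) (hR : ∀ v, R v = if v ∈ SG then p else 0)
    (hreach : ∃ q : List V, IsGoalPath E s0 SG q)
    (hnb : ¬ ∀ q : List V, IsGoalPath E s0 SG q → b ∈ q) :
    (∃ q : List V, IsGoalPath E s0 SG q ∧ b ∉ q ∧ q.Nodup) ∧
    (∃ t : ℕ → V, t 0 = s0 ∧ (∀ i, E (t i) (t (i + 1))) ∧ (∀ i, t i ≠ b) ∧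
      γ ^ (Fintype.card V) * p ≤ ∑' i : ℕ, γ ^ i * R (t i)) := by
  push_neg at hnb
  obtain ⟨q0, hq0, hbq0⟩ := hnb
  obtain ⟨hne0, hhead0, hchain0, g, hg, hlast0⟩ := hq0
  obtain ⟨q, hchain, hhead, hlast, hnd, hsub⟩ :=
    simplify_path E q0.length q0 le_rfl hchain0
  rw [hhead0] at hhead
  rw [hlast0] at hlast
  have hne : q ≠ [] := by
    intro h; rw [h] at hhead; simp at hhead
  have hbq : b ∉ q := fun h => hbq0 (hsub b h)
  have hgoal : IsGoalPath E s0 SG q := ⟨hne, hhead, hchain, g, hg, hlast⟩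
  refine ⟨⟨q, hgoal, hbq, hnd⟩, ?_⟩
  -- Part 2
  have hL : 0 < q.length := List.length_pos_iff.mpr hne
  set L := q.length with hLdef
  have hlt : ∀ i : ℕ, min i (L - 1) < L := fun i => by omega
  set t : ℕ → V := fun i => q.get ⟨min i (L - 1), hlt i⟩ with ht
  have hget0 : q.get ⟨0, hL⟩ = s0 := by
    have : q.head? = some (q.get ⟨0, hL⟩) := by
      rw [List.head?_eq_getElem?, List.getElem?_eq_getElem hL]; rfl
    rw [hhead] at this; exact (Option.some_inj.mp this).symm
  have hgetL : q.get ⟨L - 1, by omega⟩ = g := by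
    have h1 : q.getLast? = some (q.getLast hne) := List.getLast?_eq_getLast hne
    rw [hlast] at h1
    have h2 : q.getLast hne = q.get ⟨L - 1, by omega⟩ := List.getLast_eq_getElem hne
    rw [h2] at h1
    exact Option.some_inj.mp h1.symm
  have htmem : ∀ i, t i ∈ q := fun i => List.get_mem q _
  have hchain' := List.isChain_iff_getElem.mp hchain
  have hEstep : ∀ i, E (t i) (t (i + 1)) := by
    intro i
    by_cases h : i + 1 ≤ L - 1
    · have e1 : min i (L - 1) = i := by omega
      have e2 : min (i + 1) (L - 1) = i + 1 := by omega
      have := hchain' i (by omega)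
      simp only [ht, e1, e2]
      exact this
    · have e1 : min i (L - 1) = L - 1 := by omega
      have e2 : min (i + 1) (L - 1) = L - 1 := by omega
      have hti : t i = g := by simp only [ht, e1]; exact hgetL
      have hti1 : t (i + 1) = g := by simp only [ht, e2]; exact hgetL
      rw [hti, hti1]
      exact (habs g hg g).mpr rfl
  have hLcard : L ≤ Fintype.card V := by
    have := hnd.length_le_card
    simpa using this
  set N := Fintype.card V with hN
  have htN : t N = g := by
    have : min N (L - 1) = L - 1 := by omega
    simp only [ht, this]; exact hgetL
  have h0 : ∀ i, 0 ≤ γ ^ i * R (t i) := by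
    intro i; rw [hR]; split_ifs with h
    · positivity
    · simp
  have hle : ∀ i, γ ^ i * R (t i) ≤ γ ^ i * p := by
    intro i; rw [hR]; split_ifs with h
    · exact le_rfl
    · have := pow_nonneg hγ0.le i; nlinarith
  have hsum : Summable fun i => γ ^ i * R (t i) :=
    Summable.of_nonneg_of_le h0 hle
      ((summable_geometric_of_lt_one hγ0.le hγ1).mul_right p)
  refine ⟨t, ?_, hEstep, fun i hib => hbq (hib ▸ htmem i), ?_⟩
  · simp only [ht, Nat.zero_min]
    exact hget0
  · have hfN : γ ^ N * R (t N) = γ ^ N * p := by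
      rw [htN, hR]; simp [hg]
    calc γ ^ N * p = γ ^ N * R (t N) := hfN.symm
      _ ≤ ∑' i : ℕ, γ ^ i * R (t i) := Summable.le_tsum hsum N (fun j _ => h0 j)
end

section
/- The set of bottleneck states of a finite MDP with at least one goal-reaching trace forms a set that is totally ordered by the 'first visit' order: for any two bottlenecks b1, b2, either every goal-reaching trace from s0 visits b1 before (or at the same time as) b2, or every goal-reaching trace visits b2 before b1. -/
/-
Two goal traces that pass through a common state `b` can be spliced there: the part of the
first up to `b` followed by the part of the second after `b` is again a goal trace. Splicing
a trace with itself cuts out loops, so some goal trace `r` visits no state twice. If `r` visits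
`b1` before `b2` while some trace `p` reaches `b2` before `b1`, then `p` up to `b2` followed by
`r` after `b2` is a goal trace that never visits `b1`, so `b1` is not a bottleneck.
-/

/-- A nonzero-probability trace in an MDP. -/
def NZPath {S A : Type} (T : S → A → S → ℝ) (p : List S) : Prop :=
  p.Chain' (fun s s' => ∃ a, 0 < T s a s')

/-- A goal-reaching trace from `s0`. -/
def GoalTrace {S A : Type} (T : S → A → S → ℝ) (s0 : S) (SG : Set S) (p : List S) : Prop :=
  p ≠ [] ∧ p.head? = some s0 ∧ NZPath T p ∧ ∃ g ∈ SG, p.getLast? = some g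

/-- A bottleneck state: visited by every goal-reaching trace from `s0`. -/
def Bottleneck {S A : Type} (T : S → A → S → ℝ) (s0 : S) (SG : Set S) (b : S) : Prop :=
  ∀ p : List S, GoalTrace T s0 SG p → b ∈ p

namespace List

variable {α : Type*}

theorem IsChain.splice {R : α → α → Prop} {u v u' v' : List α} {b : α}
    (h : IsChain R (u ++ b :: v)) (h' : IsChain R (u' ++ b :: v')) :
    IsChain R (u ++ b :: v') := by
  have hu : IsChain R (u ++ [b]) := h.prefix ⟨v, by simp⟩
  simpa using hu.append_overlap (h'.suffix ⟨u', by simp⟩) (cons_ne_nil b [])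

theorem exists_eq_append_cons_append_cons_of_not_nodup :
    ∀ {l : List α}, ¬ l.Nodup → ∃ u x w v, l = u ++ x :: w ++ x :: v
  | [], h => absurd nodup_nil h
  | a :: l, h => by
    by_cases ha : a ∈ l
    · obtain ⟨w, v, rfl⟩ := append_of_mem ha
      exact ⟨[], a, w, v, rfl⟩
    · obtain ⟨u, x, w, v, rfl⟩ :=
        exists_eq_append_cons_append_cons_of_not_nodup (l := l) fun hl => h (nodup_cons.2 ⟨ha, hl⟩)
      exact ⟨a :: u, x, w, v, rfl⟩

variable [DecidableEq α]

theorem idxOf_le_idxOf_append_cons_iff {u v : List α} {a b : α} (ha : a ∉ u) :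
    (u ++ a :: v).idxOf a ≤ (u ++ a :: v).idxOf b ↔ b ∉ u := by
  rw [idxOf_append_of_notMem ha, idxOf_cons_self]
  by_cases hb : b ∈ u
  · simpa [idxOf_append_of_mem hb, hb] using idxOf_lt_length_iff.2 hb
  · simp [idxOf_append_of_notMem hb, hb]

end List

section

variable {S A : Type} {T : S → A → S → ℝ} {s0 : S} {SG : Set S}

theorem GoalTrace.splice {u v u' v' : List S} {b : S} (h : GoalTrace T s0 SG (u ++ b :: v))
    (h' : GoalTrace T s0 SG (u' ++ b :: v')) : GoalTrace T s0 SG (u ++ b :: v') := by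
  obtain ⟨-, hhead, hpath, g, hg, -⟩ := h
  obtain ⟨-, -, hpath', g', hg', hlast'⟩ := h'
  refine ⟨by simp, by simpa using hhead, List.IsChain.splice hpath hpath', g', hg', ?_⟩
  simpa using hlast'

theorem GoalTrace.exists_nodup {p : List S} (hp : GoalTrace T s0 SG p) :
    ∃ r, GoalTrace T s0 SG r ∧ r.Nodup := by
  by_cases hnd : p.Nodup
  · exact ⟨p, hp, hnd⟩
  obtain ⟨u, x, w, v, hloop⟩ := List.exists_eq_append_cons_append_cons_of_not_nodup hnd
  rw [hloop] at hp
  have hshortcut : GoalTrace T s0 SG (u ++ x :: v) :=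
    GoalTrace.splice (v := w ++ x :: v) (by simpa using hp) hp
  exact hshortcut.exists_nodup
termination_by p.length
decreasing_by simp [hloop]

theorem Bottleneck.idxOf_le_of_nodup [DecidableEq S] {b1 b2 : S}
    (hb1 : Bottleneck T s0 SG b1) (hb2 : Bottleneck T s0 SG b2)
    {r : List S} (hr : GoalTrace T s0 SG r) (hrn : r.Nodup) (hle : r.idxOf b1 ≤ r.idxOf b2)
    {p : List S} (hp : GoalTrace T s0 SG p) : p.idxOf b1 ≤ p.idxOf b2 := by
  by_contra! hlt
  obtain ⟨u, v, rfl, hb2u⟩ := List.eq_append_cons_of_mem (hb2 p hp)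
  have hb1u : b1 ∉ u := (List.idxOf_le_idxOf_append_cons_iff hb2u).1 hlt.le
  obtain ⟨u', v', rfl, hb2u'⟩ := List.eq_append_cons_of_mem (hb2 _ hr)
  have hb1v' : b1 ∈ v' := by
    have := hb1 _ (hp.splice hr)
    simp only [List.mem_append, List.mem_cons] at this
    rcases this with h | rfl | h
    · exact absurd h hb1u
    · exact absurd hlt (lt_irrefl _)
    · exact h
  have hb1u' : b1 ∉ u' := fun h =>
    (List.nodup_append.1 hrn).2.2 b1 h b1 (List.mem_cons_of_mem _ hb1v') rfl
  have hge := (List.idxOf_le_idxOf_append_cons_iff (v := v') hb2u').2 hb1u'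
  have hb1r : b1 ∈ u' ++ b2 :: v' := by simp [hb1v']
  have heq : b1 = b2 := (List.idxOf_inj hb1r).1 (le_antisymm hle hge)
  exact lt_irrefl _ (heq ▸ hlt)

end

theorem stmt6_general {S A : Type} [DecidableEq S]
    (T : S → A → S → ℝ) (s0 : S) (SG : Set S)
    (hreach : ∃ p : List S, GoalTrace T s0 SG p)
    (b1 b2 : S) (hb1 : Bottleneck T s0 SG b1) (hb2 : Bottleneck T s0 SG b2) :
    (∀ p : List S, GoalTrace T s0 SG p → p.idxOf b1 ≤ p.idxOf b2) ∨
    (∀ p : List S, GoalTrace T s0 SG p → p.idxOf b2 ≤ p.idxOf b1) := by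
  obtain ⟨p, hp⟩ := hreach
  obtain ⟨r, hr, hrn⟩ := hp.exists_nodup
  exact (le_total (r.idxOf b1) (r.idxOf b2)).imp
    (fun h _ => hb1.idxOf_le_of_nodup hb2 hr hrn h) (fun h _ => hb2.idxOf_le_of_nodup hb1 hr hrn h)

/-- in a finite MDP with at least one goal-reaching trace, the bottleneck
states are totally ordered by the first-visit order: for any two bottlenecks `b1, b2`,
either every goal-reaching trace first visits `b1` no later than `b2`, or every
goal-reaching trace first visits `b2` no later than `b1`. -/
theorem stmt6 {S A : Type} [Fintype S] [Fintype A] [DecidableEq S]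
    (T : S → A → S → ℝ) (s0 : S) (SG : Set S)
    (hreach : ∃ p : List S, GoalTrace T s0 SG p)
    (b1 b2 : S) (hb1 : Bottleneck T s0 SG b1) (hb2 : Bottleneck T s0 SG b2) :
    (∀ p : List S, GoalTrace T s0 SG p → p.idxOf b1 ≤ p.idxOf b2) ∨
    (∀ p : List S, GoalTrace T s0 SG p → p.idxOf b2 ≤ p.idxOf b1) :=
  stmt6_general T s0 SG hreach b1 b2 hb1 hb2
end

section
/- In the product construction M^Ŝ tracking visited subgoals, there is a bijection between traces of M from s0 and traces of M^Ŝ from (s0, {s0} ∩ Ŝ) preserving transition probabilities, under which a trace of M visits all states of Ŝ and ends in a goal state if and only if the corresponding trace of M^Ŝ ends in a state (g, Ŝ) with g ∈ S_G. -/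
open scoped Classical

/-- Transition function of the product MDP `M^Ŝ` on `S × 2^Ŝ`: from `(s, V)` under
action `a`, go to `(s', V ∪ ({s'} ∩ Ŝ))` with probability `T s a s'` (the visited
component accumulates subgoal states as they are entered). -/
noncomputable def prodT {S A : Type} (T : S → A → S → ℝ) (Shat : Set S) :
    (S × Set S) → A → (S × Set S) → ℝ :=
  fun sv a sv' => if sv'.2 = sv.2 ∪ ({sv'.1} ∩ Shat) then T sv.1 a sv'.1 else 0

/-- Lift a state sequence of `M` to the corresponding state sequence of `M^Ŝ`,
accumulating the visited subgoal states. -/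
def lift {S : Type} (Shat : Set S) : Set S → List S → List (S × Set S)
  | _, [] => []
  | V, s :: rest => (s, V ∪ ({s} ∩ Shat)) :: lift Shat (V ∪ ({s} ∩ Shat)) rest

/-- A trace of `M` from `s0`: a nonempty state sequence of nonzero probability
(under some actions) starting at `s0`. -/
def MTrace {S A : Type} (T : S → A → S → ℝ) (s0 : S) (p : List S) : Prop :=
  p.head? = some s0 ∧ p.Chain' (fun s s' => ∃ a, 0 < T s a s')

/-- A trace of `M^Ŝ` from `(s0, {s0} ∩ Ŝ)`. -/
def PTrace {S A : Type} (T : S → A → S → ℝ) (Shat : Set S) (s0 : S)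
    (q : List (S × Set S)) : Prop :=
  q.head? = some (s0, {s0} ∩ Shat) ∧ q.Chain' (fun x y => ∃ a, 0 < prodT T Shat x a y)

lemma prodT_eq {S A : Type} (T : S → A → S → ℝ) (Shat : Set S)
    (s : S) (V : Set S) (a : A) (s' : S) :
    prodT T Shat (s, V) a (s', V ∪ ({s'} ∩ Shat)) = T s a s' := by
  simp [prodT]

lemma lift_map_fst {S : Type} (Shat : Set S) :
    ∀ (p : List S) (V : Set S), (lift Shat V p).map Prod.fst = p
  | [], _ => rfl
  | s :: rest, V => by simp [lift, lift_map_fst Shat rest]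

lemma lift_chain' {S A : Type} (T : S → A → S → ℝ) (Shat : Set S) :
    ∀ (p : List S) (V : Set S), p.Chain' (fun s s' => ∃ a, 0 < T s a s') →
      (lift Shat V p).Chain' (fun x y => ∃ a, 0 < prodT T Shat x a y)
  | [], _, _ => List.isChain_nil
  | [s], V, _ => by simp [lift, List.Chain', List.isChain_singleton]
  | s :: s' :: rest, V, h => by
    unfold List.Chain' at h; rw [List.isChain_cons_cons] at h
    obtain ⟨⟨a, ha⟩, h2⟩ := h
    have ih := lift_chain' T Shat (s' :: rest) (V ∪ ({s} ∩ Shat)) h2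
    rw [lift, lift]
    rw [lift] at ih
    refine List.IsChain.cons_cons ?_ ih
    exact ⟨a, by rwa [prodT_eq]⟩

lemma unlift {S A : Type} (T : S → A → S → ℝ) (Shat : Set S) :
    ∀ (q : List (S × Set S)) (V : Set S),
      (q = [] ∨ ∃ s rest, q = (s, V ∪ ({s} ∩ Shat)) :: rest) →
      q.Chain' (fun x y => ∃ a, 0 < prodT T Shat x a y) →
      q = lift Shat V (q.map Prod.fst)
  | [], _, _, _ => rfl
  | x :: rest, V, hh, hc => by
    rcases hh with h | ⟨s, rest', heq⟩
    · simp at h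
    obtain ⟨hx, hr⟩ : x = (s, V ∪ ({s} ∩ Shat)) ∧ rest = rest' := by
      constructor <;> injection heq
    subst hx; subst hr
    rw [List.map_cons]
    rw [lift]
    congr 1
    apply unlift T Shat rest (V ∪ ({s} ∩ Shat)) _ hc.tail
    cases rest with
    | nil => left; rfl
    | cons y rest2 =>
      right
      unfold List.Chain' at hc; rw [List.isChain_cons_cons] at hc
      obtain ⟨⟨a, ha⟩, _⟩ := hc
      have : y.2 = (V ∪ ({s} ∩ Shat)) ∪ ({y.1} ∩ Shat) := by
        by_contra h
        simp [prodT, h] at ha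
      exact ⟨y.1, rest2, by rw [← this]⟩

lemma lift_getLast {S : Type} (Shat : Set S) :
    ∀ (p : List S) (V : Set S) (h : p ≠ []),
      (lift Shat V p).getLast? = some (p.getLast h, V ∪ ({x | x ∈ p} ∩ Shat))
  | [], _, h => absurd rfl h
  | [s], V, _ => by simp [lift]
  | s :: s' :: rest, V, _ => by
    have ih := lift_getLast Shat (s' :: rest) (V ∪ ({s} ∩ Shat)) (by simp)
    rw [lift] at ih ⊢
    rw [lift, List.getLast?_cons_cons, ← lift, lift] at *
    rw [ih]
    congr 1
    refine Prod.ext ?_ ?_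
    · simp [List.getLast_cons]
    · show V ∪ ({s} ∩ Shat) ∪ ({x | x ∈ s' :: rest} ∩ Shat) = V ∪ ({x | x ∈ s :: s' :: rest} ∩ Shat)
      ext x; simp [List.mem_cons]; tauto

lemma prodT_pos_imp {S A : Type} (T : S → A → S → ℝ) (Shat : Set S)
    {x y : S × Set S} {a : A} (h : 0 < prodT T Shat x a y) : 0 < T x.1 a y.1 := by
  by_cases hc : y.2 = x.2 ∪ ({y.1} ∩ Shat)
  · rwa [prodT, if_pos hc] at h
  · rw [prodT, if_neg hc] at h; exact absurd h (lt_irrefl 0)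

/-- the lifting map is a bijection between traces of `M` from `s0` and
traces of `M^Ŝ` from `(s0, {s0} ∩ Ŝ)`; it preserves transition probabilities, and a
trace of `M` visits all of `Ŝ` and ends in a goal state iff the corresponding trace of
`M^Ŝ` ends in a state `(g, Ŝ)` with `g ∈ SG`. -/
theorem stmt10 {S A : Type} [Fintype S] [Fintype A]
    (T : S → A → S → ℝ) (s0 : S) (SG : Set S) (Shat : Set S) :
    ∃ F : {p : List S // MTrace T s0 p} ≃ {q : List (S × Set S) // PTrace T Shat s0 q},
      (∀ p, (F p).val = lift Shat ∅ p.val) ∧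
      (∀ (s : S) (V : Set S) (a : A) (s' : S),
          prodT T Shat (s, V) a (s', V ∪ ({s'} ∩ Shat)) = T s a s') ∧
      (∀ p : {p : List S // MTrace T s0 p},
          ((∀ x ∈ Shat, x ∈ p.val) ∧ ∃ g ∈ SG, p.val.getLast? = some g) ↔
          (∃ g ∈ SG, (F p).val.getLast? = some (g, Shat))) := by
  have toP : ∀ p : List S, MTrace T s0 p → PTrace T Shat s0 (lift Shat ∅ p) := by
    rintro p ⟨hh, hc⟩
    cases p with
    | nil => simp at hh
    | cons s rest =>
      have hs : s = s0 := by simpa using hh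
      subst hs
      exact ⟨by simp [lift], lift_chain' T Shat _ _ hc⟩
  have toM : ∀ q : List (S × Set S), PTrace T Shat s0 q →
      MTrace T s0 (q.map Prod.fst) := by
    rintro q ⟨hh, hc⟩
    constructor
    · rw [List.head?_map, hh]; rfl
    · unfold List.Chain' at hc ⊢; rw [List.isChain_map]
      exact hc.imp (fun x y ⟨a, ha⟩ => ⟨a, prodT_pos_imp T Shat ha⟩)
  have runlift : ∀ q : List (S × Set S), PTrace T Shat s0 q →
      lift Shat ∅ (q.map Prod.fst) = q := by
    rintro q ⟨hh, hc⟩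
    refine (unlift T Shat q ∅ ?_ hc).symm
    cases q with
    | nil => exact Or.inl rfl
    | cons x rest =>
      right
      have hx : x = (s0, {s0} ∩ Shat) := by simpa using hh
      exact ⟨s0, rest, by rw [hx, Set.empty_union]⟩
  refine ⟨⟨fun p => ⟨lift Shat ∅ p.val, toP p.val p.2⟩,
          fun q => ⟨q.val.map Prod.fst, toM q.val q.2⟩,
          fun p => Subtype.ext (lift_map_fst Shat p.val ∅),
          fun q => Subtype.ext (runlift q.val q.2)⟩,
        fun p => rfl, prodT_eq T Shat, ?_⟩
  rintro ⟨p, hp⟩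
  have hne : p ≠ [] := by
    intro h; subst h; exact (by simp [MTrace] at hp)
  have hlast := lift_getLast Shat p ∅ hne
  rw [Set.empty_union] at hlast
  show _ ↔ ∃ g ∈ SG, (lift Shat ∅ p).getLast? = some (g, Shat)
  rw [hlast]
  constructor
  · rintro ⟨hall, g, hg, hgl⟩
    refine ⟨g, hg, ?_⟩
    have hgeq : p.getLast hne = g := by
      rw [List.getLast?_eq_getLast (l := p) hne] at hgl
      exact Option.some_injective _ hgl
    simp only [Option.some_inj, Prod.mk.injEq]
    exact ⟨hgeq, Set.inter_eq_right.mpr (fun x hx => hall x hx)⟩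
  · rintro ⟨g, hg, hgl⟩
    simp only [Option.some_inj, Prod.mk.injEq] at hgl
    obtain ⟨h1, h2⟩ := hgl
    refine ⟨fun x hx => Set.inter_eq_right.mp h2 hx, g, hg, ?_⟩
    rw [List.getLast?_eq_getLast (l := p) hne, h1]
end

section
/- Let B be a finite set, 𝕀 a family of 'achievable' subsets of B that is downward closed, and define a query process where the unknown true set I_G ⊆ B is revealed one element (membership query) at a time. If some b* ∈ B belongs to no member of 𝕀 (b* is unachievable), then any query strategy that determines whether I_G ⊆ I' for some I' ∈ 𝕀 must, in the worst case, query b* whenever all other queried elements were answered consistently with achievability; hence querying b* first never increases the worst-case number of queries. -/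
/-- An adaptive membership-query strategy: either stop, or query an element and branch
on the oracle's yes/no answer. -/
inductive QTree (B : Type) : Type
  | done : QTree B
  | ask : B → QTree B → QTree B → QTree B

/-- Correctness of a strategy given confirmed members `K` and confirmed non-members
`N`: at every leaf it can certify failure (no achievable `I' ∈ 𝕀` contains the
confirmed members `K`) or success (`K` together with all still-possibly-member
elements is contained in some achievable `I' ∈ 𝕀`). -/
def QTree.correct {B : Type} (𝕀 : Set (Set B)) : QTree B → Set B → Set B → Prop
  | .done, K, N => (¬ ∃ I' ∈ 𝕀, K ⊆ I') ∨ (∃ I' ∈ 𝕀, K ∪ {b | b ∉ N} ⊆ I')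
  | .ask b y n, K, N => QTree.correct 𝕀 y (insert b K) N ∧ QTree.correct 𝕀 n K (insert b N)

/-- The set of elements queried when the strategy is run against the oracle `f`
(`f b = true` iff `b ∈ I_G`). -/
def QTree.asked {B : Type} : QTree B → (B → Bool) → Set B
  | .done, _ => ∅
  | .ask b y n, f => insert b (if f b then y.asked f else n.asked f)

/-- The worst-case number of queries of a strategy. -/
def QTree.worst {B : Type} : QTree B → ℕ
  | .done => 0
  | .ask _ y n => 1 + max y.worst n.worst


section Aux
variable {B : Type}

lemma asked_aux (𝕀 : Set (Set B)) (bstar : B) (hb : ∀ I' ∈ 𝕀, bstar ∉ I') :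
    ∀ t : QTree B, ∀ K N : Set B, t.correct 𝕀 K N → ∀ f : B → Bool,
      {x | f x = true} ∈ 𝕀 → K ⊆ {x | f x = true} → bstar ∉ N → bstar ∈ t.asked f := by
  intro t
  induction t with
  | done =>
      intro K N hc f hf hK hN
      rcases hc with h | ⟨I', hI, hsub⟩
      · exact absurd ⟨_, hf, hK⟩ h
      · exact absurd (hsub (Or.inr hN)) (hb I' hI)
  | ask b y n ihy ihn =>
      intro K N hc f hf hK hN
      by_cases hbb : bstar = b
      · exact Or.inl hbb
      · cases hfb : f b with
        | true =>
            have : bstar ∈ y.asked f := by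
              refine ihy (insert b K) N hc.1 f hf ?_ hN
              exact Set.insert_subset hfb hK
            simp [QTree.asked, hfb]
            exact Or.inr this
        | false =>
            have : bstar ∈ n.asked f := by
              refine ihn K (insert b N) hc.2 f hf hK ?_
              simp [Set.mem_insert_iff, hbb, hN]
            simp [QTree.asked, hfb]
            exact Or.inr this

open Classical in
noncomputable def trim (𝕀 : Set (Set B)) (bstar : B) : QTree B → Set B → QTree B
  | .done, _ => .done
  | .ask b y n, K =>
      if b = bstar then n
      else .ask b
        (if ∃ I' ∈ 𝕀, insert b K ⊆ I' then trim 𝕀 bstar y (insert b K) else .done)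
        (trim 𝕀 bstar n K)

lemma trim_spec (𝕀 : Set (Set B)) (bstar : B) (hb : ∀ I' ∈ 𝕀, bstar ∉ I') :
    ∀ t : QTree B, ∀ K N : Set B, t.correct 𝕀 K N → bstar ∉ N → (∃ I' ∈ 𝕀, K ⊆ I') →
      (trim 𝕀 bstar t K).correct 𝕀 K (insert bstar N) ∧
      (trim 𝕀 bstar t K).worst + 1 ≤ t.worst := by
  intro t
  induction t with
  | done =>
      intro K N hc hN hach
      rcases hc with h | ⟨I', hI, hsub⟩
      · exact absurd hach h
      · exact absurd (hsub (Or.inr hN)) (hb I' hI)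
  | ask b y n ihy ihn =>
      intro K N hc hN hach
      by_cases hbb : b = bstar
      · subst hbb
        have h2 := hc.2
        have e : trim 𝕀 b (QTree.ask b y n) K = n := by simp [trim]
        rw [e]
        exact ⟨h2, by simp [QTree.worst]; omega⟩
      · have hN' : bstar ∉ insert b N := by
          simp [Set.mem_insert_iff, Ne.symm hbb, hN]
        have hn := ihn K (insert b N) hc.2 hN' hach
        by_cases hach' : ∃ I' ∈ 𝕀, insert b K ⊆ I'
        · have hy := ihy (insert b K) N hc.1 hN hach'
          constructor
          · simp only [trim, if_neg hbb, if_pos hach', QTree.correct]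
            refine ⟨hy.1, ?_⟩
            rw [Set.insert_comm]
            exact hn.1
          · simp only [trim, if_neg hbb, if_pos hach', QTree.worst]
            have := hy.2
            have := hn.2
            omega
        · constructor
          · simp only [trim, if_neg hbb, if_neg hach', QTree.correct]
            refine ⟨Or.inl hach', ?_⟩
            rw [Set.insert_comm]
            exact hn.1
          · simp only [trim, if_neg hbb, if_neg hach', QTree.worst]
            have := hn.2
            omega

end Aux

/-- let `𝕀` be a downward-closed nonempty family of achievable subsets
of a finite `B` and let `b*` belong to no member of `𝕀`. Then (i) every correct
strategy must query `b*` whenever the oracle's answers are consistent with an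
achievable set (i.e. on every true set `I_G ∈ 𝕀`), and (ii) querying `b*` first never
increases the worst-case number of queries: some correct strategy that asks `b*` at
the root has worst case no larger than that of any given correct strategy. -/
theorem stmt16 {B : Type} [Fintype B] [DecidableEq B]
    (𝕀 : Set (Set B)) (hdc : ∀ X ∈ 𝕀, ∀ Y ⊆ X, Y ∈ 𝕀) (hne : 𝕀.Nonempty)
    (bstar : B) (hb : ∀ I' ∈ 𝕀, bstar ∉ I') :
    (∀ t : QTree B, t.correct 𝕀 ∅ ∅ →
        ∀ f : B → Bool, {x | f x = true} ∈ 𝕀 → bstar ∈ t.asked f) ∧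
    (∀ t : QTree B, t.correct 𝕀 ∅ ∅ →
        ∃ (y n : QTree B), (QTree.ask bstar y n).correct 𝕀 ∅ ∅ ∧
          (QTree.ask bstar y n).worst ≤ t.worst) := by
  constructor
  · intro t hc f hf
    exact asked_aux 𝕀 bstar hb t ∅ ∅ hc f hf (Set.empty_subset _) (Set.notMem_empty _)
  · intro t hc
    obtain ⟨I0, hI0⟩ := hne
    have hach : ∃ I' ∈ 𝕀, (∅ : Set B) ⊆ I' := ⟨I0, hI0, Set.empty_subset _⟩
    have hspec := trim_spec 𝕀 bstar hb t ∅ ∅ hc (Set.notMem_empty _) hach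
    refine ⟨.done, trim 𝕀 bstar t ∅, ⟨?_, hspec.1⟩, ?_⟩
    · exact Or.inl (fun ⟨I', hI, hsub⟩ => hb I' hI (hsub (Set.mem_insert _ _)))
    · simp only [QTree.worst]
      have := hspec.2
      omega
end
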